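/- arXiv:1808.09748 — 3 statements merged into one kernel-verified Lean document; each statement's English description precedes it below -/
import Mathlib

section
/- Let g be a positive, symmetric, differentiable density on ℝ, decreasing near +∞, with |(log g)'| ≤ Λ and g/φ increasing on [0,∞) from (g/φ)(0) < 1 to ∞ (φ the standard normal density). Then: (i) for each fixed w ∈ [0,1], the maps x ↦ ℓ(x;w,g) and x ↦ q(x;w,g) are symmetric (even) and decreasing on [0,∞); (ii) for all x ∈ ℝ and w ∈ [0,1], q(x;w,g) ≤ ℓ(x;w,g). -/
open MeasureTheory ProbabilityTheory Filter Set
open scoped Classical ENNReal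

/-- The standard normal density `φ`. -/
noncomputable def stdphi (x : ℝ) : ℝ := (Real.sqrt (2 * Real.pi))⁻¹ * Real.exp (-(x ^ 2) / 2)

/-- The standard normal upper tail function `Φ̄`. -/
noncomputable def Phibar (s : ℝ) : ℝ := ∫ x in Set.Ioi s, stdphi x

/-- The inverse of `Φ̄` (as the generalized inverse). -/
noncomputable def PhibarInv (y : ℝ) : ℝ := sInf {x : ℝ | Phibar x ≤ y}

/-- The upper tail function `Ḡ(s) = ∫_s^∞ g`. -/
noncomputable def Gbar (g : ℝ → ℝ) (s : ℝ) : ℝ := ∫ x in Set.Ioi s, g x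

/-- The ℓ-value `ℓ(x; w, g)`. -/
noncomputable def lval (g : ℝ → ℝ) (w x : ℝ) : ℝ :=
  ((1 - w) * stdphi x) / ((1 - w) * stdphi x + w * g x)

/-- The q-value `q(x; w, g)`. -/
noncomputable def qval (g : ℝ → ℝ) (w x : ℝ) : ℝ :=
  ((1 - w) * Phibar |x|) / ((1 - w) * Phibar |x| + w * Gbar g |x|)

/-- `r(w,t) = wt/((1−w)(1−t))`. -/
noncomputable def rwt (w t : ℝ) : ℝ := w * t / ((1 - w) * (1 - t))

/-- `β(x) = g(x)/φ(x) − 1`. -/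
noncomputable def betaf (g : ℝ → ℝ) (x : ℝ) : ℝ := g x / stdphi x - 1

/-- `m̃(w) = −E₀[β(X,w)]`, the minus-expectation of the score at a null coordinate. -/
noncomputable def mtilde (g : ℝ → ℝ) (w : ℝ) : ℝ :=
  -∫ x, betaf g x / (1 + w * betaf g x) * stdphi x

/-- `m₁(μ,w) = E_μ[β(X,w)]` where `X ~ N(μ,1)`. -/
noncomputable def m1 (g : ℝ → ℝ) (μ w : ℝ) : ℝ :=
  ∫ x, betaf g x / (1 + w * betaf g x) * stdphi (x - μ)



/-! ### Auxiliary lemmas -/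

lemma stdphi_pos' (x : ℝ) : 0 < stdphi x := by
  unfold stdphi
  positivity

lemma stdphi_even' (x : ℝ) : stdphi (-x) = stdphi x := by simp [stdphi, neg_sq]

lemma stdphi_integrable' : Integrable stdphi := by
  have h : Integrable (fun x : ℝ => Real.exp (-(1/2 : ℝ) * x ^ 2)) :=
    integrable_exp_neg_mul_sq (by norm_num)
  have h2 : Integrable (fun x : ℝ => Real.exp (-(x ^ 2) / 2)) := by
    convert h using 2 with x
    ring_nf
  exact h2.const_mul _

lemma setIntegral_pos_Ioi' {f : ℝ → ℝ} (hf : ∀ x, 0 < f x) (hint : Integrable f) (s : ℝ) :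
    0 < ∫ x in Set.Ioi s, f x := by
  rw [setIntegral_pos_iff_support_of_nonneg_ae
      (Filter.Eventually.of_forall fun x => (hf x).le) hint.integrableOn]
  have : Function.support f = Set.univ := by
    ext x; simp [Function.support, (hf x).ne']
  rw [this, Set.univ_inter]
  simp [Real.volume_Ioi]

lemma frac_le' (w a b c d : ℝ) (hw0 : 0 ≤ w) (hw1 : w ≤ 1) (ha : 0 < a) (hc : 0 < c)
    (hb : 0 ≤ b) (hd : 0 ≤ d) (h : b * c ≤ a * d) :
    (1 - w) * c / ((1 - w) * c + w * d) ≤ (1 - w) * a / ((1 - w) * a + w * b) := by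
  rcases hw1.eq_or_lt with h1 | h1
  · subst h1
    simp
  · have hw' : 0 < 1 - w := by linarith
    have hden1 : 0 < (1 - w) * c + w * d :=
      add_pos_of_pos_of_nonneg (by positivity) (by positivity)
    have hden2 : 0 < (1 - w) * a + w * b :=
      add_pos_of_pos_of_nonneg (by positivity) (by positivity)
    rw [div_le_div_iff₀ hden1 hden2]
    nlinarith [mul_le_mul_of_nonneg_left h (mul_nonneg hw'.le hw0)]

/-- **Lemma (monotonicity and comparison of ℓ- and q-values).** Let `g` be a positive symmetric
differentiable density, decreasing near `+∞`, with `|(log g)'| ≤ Λ` and `g/φ` increasing on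
`[0,∞)` from `(g/φ)(0) < 1` to `∞`. Then, for each `w ∈ [0,1]`:
(i) `x ↦ ℓ(x;w,g)` and `x ↦ q(x;w,g)` are even and decreasing on `[0,∞)`;
(ii) `q(x;w,g) ≤ ℓ(x;w,g)` for all `x`. -/
theorem lval_qval_monotone_and_compare
    (g : ℝ → ℝ) (Λ : ℝ)
    (hpos : ∀ x, 0 < g x) (hsymm : ∀ x, g (-x) = g x)
    (hdiff : Differentiable ℝ g) (hdens : ∫ x, g x = 1)
    (hdec : ∃ M : ℝ, StrictAntiOn g (Set.Ici M))
    (hΛ : 0 < Λ) (hlip : ∀ x : ℝ, |deriv (fun y => Real.log (g y)) x| ≤ Λ)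
    (hinc : StrictMonoOn (fun x => g x / stdphi x) (Set.Ici 0))
    (h0 : g 0 / stdphi 0 < 1)
    (hinf : Filter.Tendsto (fun x => g x / stdphi x) Filter.atTop Filter.atTop) :
    (∀ w : ℝ, w ∈ Set.Icc (0 : ℝ) 1 →
        (∀ x : ℝ, lval g w (-x) = lval g w x) ∧
          AntitoneOn (fun x => lval g w x) (Set.Ici 0) ∧
          (∀ x : ℝ, qval g w (-x) = qval g w x) ∧
          AntitoneOn (fun x => qval g w x) (Set.Ici 0)) ∧
      (∀ w : ℝ, w ∈ Set.Icc (0 : ℝ) 1 → ∀ x : ℝ, qval g w x ≤ lval g w x) := by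

  -- basic facts
  have hgint : Integrable g := by
    by_contra h
    rw [MeasureTheory.integral_undef h] at hdens
    exact one_ne_zero hdens.symm
  have hmono : ∀ x y : ℝ, 0 ≤ x → x ≤ y → g x * stdphi y ≤ stdphi x * g y := by
    intro x y hx hxy
    have h1 : g x / stdphi x ≤ g y / stdphi y :=
      hinc.monotoneOn (Set.mem_Ici.mpr hx) (Set.mem_Ici.mpr (le_trans hx hxy)) hxy
    rw [div_le_div_iff₀ (stdphi_pos' x) (stdphi_pos' y)] at h1
    linarith
  have hPb_pos : ∀ s : ℝ, 0 < Phibar s := fun s =>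
    setIntegral_pos_Ioi' stdphi_pos' stdphi_integrable' s
  have hGb_pos : ∀ s : ℝ, 0 < Gbar g s := fun s => setIntegral_pos_Ioi' hpos hgint s
  -- key tail inequality: (g s / φ s) Φ̄ s ≤ Ḡ s for s ≥ 0
  have key1 : ∀ s : ℝ, 0 ≤ s → g s * Phibar s ≤ stdphi s * Gbar g s := by
    intro s hs
    have hpt : ∀ x ∈ Set.Ioi s, g s / stdphi s * stdphi x ≤ g x := by
      intro x hx
      have := hmono s x hs (le_of_lt hx)
      rw [div_mul_eq_mul_div, div_le_iff₀ (stdphi_pos' s)]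
      linarith
    have h2 : ∫ x in Set.Ioi s, g s / stdphi s * stdphi x ≤ ∫ x in Set.Ioi s, g x :=
      setIntegral_mono_on ((stdphi_integrable'.const_mul _).integrableOn)
        hgint.integrableOn measurableSet_Ioi hpt
    rw [MeasureTheory.integral_const_mul] at h2
    have h3 : g s / stdphi s * Phibar s ≤ Gbar g s := h2
    calc g s * Phibar s = stdphi s * (g s / stdphi s * Phibar s) := by
          rw [← mul_assoc, mul_comm (stdphi s), div_mul_cancel₀ _ (stdphi_pos' s).ne']
        _ ≤ stdphi s * Gbar g s :=
          mul_le_mul_of_nonneg_left h3 (stdphi_pos' s).le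
  -- key cross inequality for tails
  have key2 : ∀ s t : ℝ, 0 ≤ s → s ≤ t → Gbar g s * Phibar t ≤ Phibar s * Gbar g t := by
    intro s t hs hst
    have hsplit : ∀ f : ℝ → ℝ, Integrable f →
        (∫ x in Set.Ioi s, f x) = (∫ x in Set.Ioc s t, f x) + ∫ x in Set.Ioi t, f x := by
      intro f hf
      rw [← MeasureTheory.setIntegral_union (Set.Ioc_disjoint_Ioi le_rfl) measurableSet_Ioi
        hf.integrableOn hf.integrableOn, Set.Ioc_union_Ioi_eq_Ioi hst]
    set A := ∫ x in Set.Ioc s t, g x with hA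
    set B := ∫ x in Set.Ioc s t, stdphi x with hB
    have hGs : Gbar g s = A + Gbar g t := hsplit g hgint
    have hPs : Phibar s = B + Phibar t := hsplit stdphi stdphi_integrable'
    have hBnn : 0 ≤ B :=
      MeasureTheory.setIntegral_nonneg measurableSet_Ioc fun x _ => (stdphi_pos' x).le
    have hk : 0 ≤ g t / stdphi t := div_nonneg (hpos t).le (stdphi_pos' t).le
    have hAB : A ≤ g t / stdphi t * B := by
      have hpt : ∀ x ∈ Set.Ioc s t, g x ≤ g t / stdphi t * stdphi x := by
        intro x hx
        have hx0 : 0 ≤ x := le_trans hs (le_of_lt hx.1)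
        have := hmono x t hx0 hx.2
        rw [div_mul_eq_mul_div, le_div_iff₀ (stdphi_pos' t)]
        linarith
      have := setIntegral_mono_on hgint.integrableOn
        ((stdphi_integrable'.const_mul _).integrableOn) measurableSet_Ioc hpt
      rwa [MeasureTheory.integral_const_mul] at this
    have hk1 : g t / stdphi t * Phibar t ≤ Gbar g t := by
      have := key1 t (le_trans hs hst)
      rw [div_mul_eq_mul_div, div_le_iff₀ (stdphi_pos' t)]
      linarith
    have hAPt : A * Phibar t ≤ B * Gbar g t :=
      calc A * Phibar t ≤ g t / stdphi t * B * Phibar t :=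
            mul_le_mul_of_nonneg_right hAB (hPb_pos t).le
        _ = B * (g t / stdphi t * Phibar t) := by ring
        _ ≤ B * Gbar g t := mul_le_mul_of_nonneg_left hk1 hBnn
    rw [hGs, hPs]
    nlinarith [hAPt]
  -- evenness of lval
  have lval_even : ∀ w x : ℝ, lval g w (-x) = lval g w x := by
    intro w x
    simp [lval, stdphi_even', hsymm]
  have lval_abs : ∀ w x : ℝ, lval g w |x| = lval g w x := by
    intro w x
    rcases abs_choice x with h | h
    · rw [h]
    · rw [h]; exact lval_even w x
  refine ⟨fun w hw => ⟨lval_even w, ?_, ?_, ?_⟩, ?_⟩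
  · -- lval antitone
    intro x hx y hy hxy
    exact frac_le' w (stdphi x) (g x) (stdphi y) (g y) hw.1 hw.2 (stdphi_pos' x)
      (stdphi_pos' y) (hpos x).le (hpos y).le (hmono x y hx hxy)
  · -- qval even
    intro x
    simp [qval, abs_neg]
  · -- qval antitone
    intro x hx y hy hxy
    have hx' : |x| = x := abs_of_nonneg hx
    have hy' : |y| = y := abs_of_nonneg hy
    simp only [qval, hx', hy']
    exact frac_le' w (Phibar x) (Gbar g x) (Phibar y) (Gbar g y) hw.1 hw.2 (hPb_pos x)
      (hPb_pos y) (hGb_pos x).le (hGb_pos y).le (key2 x y hx hxy)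
  · -- q ≤ ℓ
    intro w hw x
    rw [← lval_abs w x]
    have hs : (0:ℝ) ≤ |x| := abs_nonneg x
    have hkey := key1 |x| hs
    calc qval g w x
        = (1 - w) * Phibar |x| / ((1 - w) * Phibar |x| + w * Gbar g |x|) := rfl
      _ ≤ (1 - w) * stdphi |x| / ((1 - w) * stdphi |x| + w * g |x|) :=
          frac_le' w (stdphi |x|) (g |x|) (Phibar |x|) (Gbar g |x|) hw.1 hw.2
            (stdphi_pos' |x|) (hPb_pos |x|) (hpos |x|).le (hGb_pos |x|).le hkey
      _ = lval g w |x| := rfl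
end

section
/- Let g be a positive, symmetric, differentiable density on ℝ, decreasing near +∞, satisfying |(log g)'| ≤ Λ, y ↦ (1+y²)g(y) bounded, and g/φ increasing on [0,∞) from (g/φ)(0) < 1 to ∞. Let ξ = (φ/g)^{-1}. Then with C = (2π)^{1/2}‖g‖_∞, for all sufficiently small u ∈ (0,1]: ξ(u) ≥ (−2 log u − 2 log g(√(−2 log(Cu))) − log(2π))^{1/2} and ξ(u) ≤ (−2 log u − 2 log g(√(−4 log u)) − log(2π))^{1/2}; moreover the sharper bound ξ(u) ≤ (−2 log u − 2 log g((−2 log u + 5Λ(−log u)^{1/2})^{1/2}) − log(2π))^{1/2} holds for u small enough. In particular ξ(u) ~ (−2 log u)^{1/2} as u → 0. -/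
open MeasureTheory ProbabilityTheory Filter Set
open scoped Classical ENNReal

section XiProof

open Real Filter

private lemma sqrt_tendsto_atTop' : Filter.Tendsto Real.sqrt Filter.atTop Filter.atTop := by
  refine Filter.tendsto_atTop.2 fun b => ?_
  filter_upwards [Filter.eventually_ge_atTop (b ^ 2)] with t ht
  calc b ≤ |b| := le_abs_self b
    _ = Real.sqrt (b ^ 2) := (Real.sqrt_sq_eq_abs b).symm
    _ ≤ Real.sqrt t := Real.sqrt_le_sqrt ht

private lemma sqrt_ratio_tendsto_one (d : ℝ) :
    Filter.Tendsto (fun t : ℝ => Real.sqrt (2 * t + d) / Real.sqrt (2 * t))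
      Filter.atTop (nhds 1) := by
  have h1 : Filter.Tendsto (fun t : ℝ => 1 + d / (2 * t)) Filter.atTop (nhds 1) := by
    have h0 : Filter.Tendsto (fun t : ℝ => d / (2 * t)) Filter.atTop (nhds 0) :=
      Filter.Tendsto.div_atTop tendsto_const_nhds
        (Filter.Tendsto.const_mul_atTop two_pos tendsto_id)
    simpa using tendsto_const_nhds.add h0
  have h2 := (Real.continuous_sqrt.tendsto 1).comp h1
  rw [Real.sqrt_one] at h2
  refine h2.congr' ?_
  filter_upwards [Filter.eventually_ge_atTop (max 1 (-d))] with t htt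
  have ht1 : (1:ℝ) ≤ t := le_trans (le_max_left _ _) htt
  have ht2 : -d ≤ t := le_trans (le_max_right _ _) htt
  have h2t : (0:ℝ) < 2 * t := by linarith
  show Real.sqrt (1 + d / (2 * t)) = _
  rw [show 1 + d / (2 * t) = (2 * t + d) / (2 * t) by field_simp,
    Real.sqrt_div (by linarith)]

end XiProof

set_option maxHeartbeats 1000000 in
/-- **Lemma (bounds on the threshold `ξ`).** Let `g` be a positive symmetric differentiable
density, decreasing near `+∞`, with `|(log g)'| ≤ Λ`, `(1+y²)g(y)` bounded, and `g/φ`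
increasing on `[0,∞)` from `(g/φ)(0) < 1` to `∞`. Let `ξ = (φ/g)⁻¹` and
`C = √(2π)‖g‖_∞`. Then, for all sufficiently small `u ∈ (0,1]`:
`ξ(u) ≥ (−2 log u − 2 log g(√(−2 log(Cu))) − log(2π))^{1/2}`,
`ξ(u) ≤ (−2 log u − 2 log g(√(−4 log u)) − log(2π))^{1/2}`, and the sharper bound
`ξ(u) ≤ (−2 log u − 2 log g((−2 log u + 5Λ(−log u)^{1/2})^{1/2}) − log(2π))^{1/2}`.
In particular `ξ(u) ∼ (−2 log u)^{1/2}` as `u → 0⁺`. -/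

theorem xi_threshold_bounds
    (g : ℝ → ℝ) (Λ : ℝ)
    (hpos : ∀ x, 0 < g x) (hsymm : ∀ x, g (-x) = g x)
    (hdiff : Differentiable ℝ g) (hdens : ∫ x, g x = 1)
    (hdec : ∃ M : ℝ, StrictAntiOn g (Set.Ici M))
    (hΛ : 0 < Λ) (hlip : ∀ x : ℝ, |deriv (fun y => Real.log (g y)) x| ≤ Λ)
    (hbdd : ∃ M : ℝ, ∀ y : ℝ, (1 + y ^ 2) * g y ≤ M)
    (hinc : StrictMonoOn (fun x => g x / stdphi x) (Set.Ici 0))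
    (h0 : g 0 / stdphi 0 < 1)
    (hinf : Filter.Tendsto (fun x => g x / stdphi x) Filter.atTop Filter.atTop)
    (ξ : ℝ → ℝ)
    (hξ : ∀ u : ℝ, 0 < u → u ≤ stdphi 0 / g 0 → 0 ≤ ξ u ∧ stdphi (ξ u) = u * g (ξ u)) :
    (∃ u₀ : ℝ, 0 < u₀ ∧ u₀ ≤ 1 ∧ ∀ u : ℝ, 0 < u → u ≤ u₀ →
        Real.sqrt (-2 * Real.log u -
            2 * Real.log (g (Real.sqrt
              (-2 * Real.log (Real.sqrt (2 * Real.pi) * sSup (Set.range g) * u)))) -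
            Real.log (2 * Real.pi)) ≤ ξ u ∧
        ξ u ≤ Real.sqrt (-2 * Real.log u -
            2 * Real.log (g (Real.sqrt (-4 * Real.log u))) - Real.log (2 * Real.pi)) ∧
        ξ u ≤ Real.sqrt (-2 * Real.log u -
            2 * Real.log (g (Real.sqrt
              (-2 * Real.log u + 5 * Λ * Real.sqrt (-Real.log u)))) -
            Real.log (2 * Real.pi))) ∧
      Filter.Tendsto (fun u : ℝ => ξ u / Real.sqrt (-2 * Real.log u))
        (nhdsWithin 0 (Set.Ioi 0)) (nhds 1) := by
  obtain ⟨M, hM⟩ := hdec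
  obtain ⟨B, hB⟩ := hbdd
  have hπ : (0:ℝ) < 2 * Real.pi := by positivity
  have hsπ : (0:ℝ) < Real.sqrt (2 * Real.pi) := Real.sqrt_pos.2 hπ
  -- the sup of g
  have hgB : ∀ y, g y ≤ B := fun y => by nlinarith [hpos y, sq_nonneg y, hB y]
  set K := sSup (Set.range g) with hKdef
  have hKup : ∀ x, g x ≤ K := fun x =>
    le_csSup ⟨B, by rintro _ ⟨y, rfl⟩; exact hgB y⟩ ⟨x, rfl⟩
  have hKpos : 0 < K := lt_of_lt_of_le (hpos 0) (hKup 0)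
  set C := Real.sqrt (2 * Real.pi) * K with hCdef
  have hCpos : 0 < C := by positivity
  -- Lipschitz property of log ∘ g
  have hlg : ∀ a b : ℝ, |Real.log (g a) - Real.log (g b)| ≤ Λ * |a - b| := by
    intro a b
    have h := Convex.norm_image_sub_le_of_norm_deriv_le
      (f := fun y => Real.log (g y)) (s := Set.univ)
      (fun x _ => (hdiff x).log (hpos x).ne')
      (fun x _ => by simpa [Real.norm_eq_abs] using hlip x)
      convex_univ (Set.mem_univ b) (Set.mem_univ a)
    simpa [Real.norm_eq_abs] using h
  -- constants
  set c₁ : ℝ := -2 * Real.log (g 0) - Real.log (2 * Real.pi) + Λ ^ 2 with hc₁def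
  set dC : ℝ := -2 * Real.log C with hdCdef
  -- t := -log u tends to ∞
  have ht : Filter.Tendsto (fun u : ℝ => -Real.log u) (nhdsWithin 0 (Set.Ioi 0))
      Filter.atTop :=
    tendsto_neg_atBot_atTop.comp Real.tendsto_log_nhdsGT_zero
  have hsqt := sqrt_tendsto_atTop'
  have haff : ∀ d : ℝ, Filter.Tendsto (fun t : ℝ => 2 * t + d) Filter.atTop Filter.atTop :=
    fun d => Filter.tendsto_atTop_add_const_right _ d
      (Filter.Tendsto.const_mul_atTop two_pos tendsto_id)
  have hφg0 : (0:ℝ) < stdphi 0 / g 0 := by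
    have : (0:ℝ) < stdphi 0 := by
      unfold stdphi
      positivity
    exact div_pos this (hpos 0)
  -- the big eventual statement
  have key : ∀ᶠ u in nhdsWithin (0:ℝ) (Set.Ioi 0),
      ((Real.sqrt (-2 * Real.log u -
            2 * Real.log (g (Real.sqrt (-2 * Real.log (C * u)))) -
            Real.log (2 * Real.pi)) ≤ ξ u ∧
        ξ u ≤ Real.sqrt (-2 * Real.log u -
            2 * Real.log (g (Real.sqrt (-4 * Real.log u))) - Real.log (2 * Real.pi)) ∧
        ξ u ≤ Real.sqrt (-2 * Real.log u -
            2 * Real.log (g (Real.sqrt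
              (-2 * Real.log u + 5 * Λ * Real.sqrt (-Real.log u)))) -
            Real.log (2 * Real.pi))) ∧
        Real.sqrt (2 * (-Real.log u) + dC) ≤ ξ u ∧
        ξ u ≤ Λ + Real.sqrt (2 * (-Real.log u) + c₁)) := by
    have E0 : ∀ᶠ u in nhdsWithin (0:ℝ) (Set.Ioi 0), u ∈ Set.Ioi (0:ℝ) :=
      self_mem_nhdsWithin
    have E0' : ∀ᶠ u in nhdsWithin (0:ℝ) (Set.Ioi 0), u < stdphi 0 / g 0 :=
      Filter.Tendsto.eventually_lt_const hφg0 (tendsto_id.mono_left nhdsWithin_le_nhds)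
    have E1 : ∀ᶠ u in nhdsWithin (0:ℝ) (Set.Ioi 0), (1:ℝ) ≤ -Real.log u :=
      ht.eventually (Filter.eventually_ge_atTop 1)
    have E2 : ∀ᶠ u in nhdsWithin (0:ℝ) (Set.Ioi 0), c₁ ≤ -Real.log u :=
      ht.eventually (Filter.eventually_ge_atTop c₁)
    have E3 : ∀ᶠ u in nhdsWithin (0:ℝ) (Set.Ioi 0), 0 ≤ 2 * (-Real.log u) + c₁ :=
      ht.eventually ((haff c₁).eventually_ge_atTop 0)
    have E4 : ∀ᶠ u in nhdsWithin (0:ℝ) (Set.Ioi 0),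
        M ≤ Real.sqrt (2 * (-Real.log u) + dC) :=
      ht.eventually ((hsqt.comp (haff dC)).eventually_ge_atTop M)
    have E5 : ∀ᶠ u in nhdsWithin (0:ℝ) (Set.Ioi 0),
        4 * Λ ≤ Real.sqrt (-Real.log u) :=
      ht.eventually (hsqt.eventually_ge_atTop (4 * Λ))
    have E6 : ∀ᶠ u in nhdsWithin (0:ℝ) (Set.Ioi 0),
        2 * (Λ ^ 2 + c₁) ≤ 3 * Λ * Real.sqrt (-Real.log u) :=
      ht.eventually ((Filter.Tendsto.const_mul_atTop (by positivity : (0:ℝ) < 3 * Λ)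
        hsqt).eventually_ge_atTop (2 * (Λ ^ 2 + c₁)))
    filter_upwards [E0, E0', E1, E2, E3, E4, E5, E6]
      with u hu0 huφ h1L hc₁L h2c₁ hMy2 h4Λ hΛc₁
    have hu : (0:ℝ) < u := hu0
    obtain ⟨hx0, hxeq⟩ := hξ u hu (le_of_lt huφ)
    set x := ξ u with hxdef
    -- the fundamental equation
    have hxsq : x ^ 2 = -2 * Real.log u - 2 * Real.log (g x) - Real.log (2 * Real.pi) := by
      have h1 : Real.log (stdphi x) = -(Real.log (2 * Real.pi)) / 2 - x ^ 2 / 2 := by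
        rw [stdphi, Real.log_mul (by positivity) (Real.exp_pos _).ne',
          Real.log_inv, Real.log_exp, Real.log_sqrt hπ.le]
        ring
      have h2 : Real.log (u * g x) = Real.log u + Real.log (g x) :=
        Real.log_mul hu.ne' (hpos _).ne'
      have h3 := congrArg Real.log hxeq
      rw [h1, h2] at h3
      linarith
    -- crude lower bound : sqrt(2t + dC) ≤ x
    have hy2arg : -2 * Real.log (C * u) = 2 * (-Real.log u) + dC := by
      rw [Real.log_mul hCpos.ne' hu.ne']
      ring
    have hlogK : Real.log (g x) ≤ Real.log K := Real.log_le_log (hpos x) (hKup x)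
    have hlogCK : Real.log C = Real.log (2 * Real.pi) / 2 + Real.log K := by
      rw [hCdef, Real.log_mul hsπ.ne' hKpos.ne', Real.log_sqrt hπ.le]
    have hy2le : Real.sqrt (2 * (-Real.log u) + dC) ≤ x := by
      have hdC' : dC = -Real.log (2 * Real.pi) - 2 * Real.log K := by
        rw [hdCdef, hlogCK]; ring
      have harg : 2 * (-Real.log u) + dC ≤ x ^ 2 := by
        linarith [hxsq, hlogK, hdC']
      calc Real.sqrt (2 * (-Real.log u) + dC) ≤ Real.sqrt (x ^ 2) :=
            Real.sqrt_le_sqrt harg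
        _ = x := Real.sqrt_sq hx0
    have hMx : M ≤ x := le_trans hMy2 hy2le
    -- crude upper bound : x ≤ Λ + sqrt(2t + c₁)
    have hlg0 : Real.log (g 0) - Λ * x ≤ Real.log (g x) := by
      have h := hlg 0 x
      rw [zero_sub, abs_neg, abs_of_nonneg hx0] at h
      linarith [(abs_le.1 h).2]
    have hcu : x ≤ Λ + Real.sqrt (2 * (-Real.log u) + c₁) := by
      have hsq : (x - Λ) ^ 2 ≤ 2 * (-Real.log u) + c₁ := by
        rw [hc₁def]
        have hexp : (x - Λ) ^ 2 = x ^ 2 - 2 * (Λ * x) + Λ ^ 2 := by ring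
        linarith [hxsq, hlg0, hexp]
      have h1 : x - Λ ≤ Real.sqrt (2 * (-Real.log u) + c₁) := by
        calc x - Λ ≤ |x - Λ| := le_abs_self _
          _ = Real.sqrt ((x - Λ) ^ 2) := (Real.sqrt_sq_eq_abs _).symm
          _ ≤ _ := Real.sqrt_le_sqrt hsq
      linarith
    -- sqrt(2t+c₁) ≤ (7/4) sqrt t
    have hL0 : (0:ℝ) ≤ -Real.log u := by linarith
    have h74 : Real.sqrt (2 * (-Real.log u) + c₁) ≤ (7/4) * Real.sqrt (-Real.log u) := by
      have he : (7/4 : ℝ) * Real.sqrt (-Real.log u) = Real.sqrt ((49/16) * (-Real.log u)) := by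
        rw [Real.sqrt_mul (by norm_num : (0:ℝ) ≤ 49/16),
          show (49/16 : ℝ) = (7/4) ^ 2 by norm_num,
          Real.sqrt_sq (by norm_num : (0:ℝ) ≤ 7/4)]
      rw [he]
      exact Real.sqrt_le_sqrt (by linarith)
    -- x ≤ sqrt(-4 log u)
    have hxle4 : x ≤ Real.sqrt (-4 * Real.log u) := by
      have h4 : Real.sqrt (-4 * Real.log u) = 2 * Real.sqrt (-Real.log u) := by
        rw [show -4 * Real.log u = 4 * (-Real.log u) by ring,
          Real.sqrt_mul (by norm_num : (0:ℝ) ≤ 4),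
          show (4:ℝ) = 2 ^ 2 by norm_num,
          Real.sqrt_sq (by norm_num : (0:ℝ) ≤ 2)]
      rw [h4]
      linarith
    -- x ≤ sqrt(2t + 5Λ√t)
    have hxle5 : x ≤ Real.sqrt (-2 * Real.log u + 5 * Λ * Real.sqrt (-Real.log u)) := by
      apply Real.le_sqrt_of_sq_le
      have hS : x ^ 2 ≤ (Λ + Real.sqrt (2 * (-Real.log u) + c₁)) ^ 2 :=
        pow_le_pow_left₀ hx0 hcu 2
      have hsq : (Real.sqrt (2 * (-Real.log u) + c₁)) ^ 2 = 2 * (-Real.log u) + c₁ :=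
        Real.sq_sqrt h2c₁
      have hmul : Λ * Real.sqrt (2 * (-Real.log u) + c₁) ≤
          Λ * ((7/4) * Real.sqrt (-Real.log u)) :=
        mul_le_mul_of_nonneg_left h74 hΛ.le
      have hexp : (Λ + Real.sqrt (2 * (-Real.log u) + c₁)) ^ 2 =
          Λ ^ 2 + 2 * (Λ * Real.sqrt (2 * (-Real.log u) + c₁)) +
          (Real.sqrt (2 * (-Real.log u) + c₁)) ^ 2 := by ring
      linarith [hS, hsq, hmul, hΛc₁, hexp]
    -- the three statement bounds
    refine ⟨⟨?_, ?_, ?_⟩, hy2le, hcu⟩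
    · -- lower bound
      rw [hy2arg]
      have hy2M : M ≤ Real.sqrt (2 * (-Real.log u) + dC) := hMy2
      have hgle : g x ≤ g (Real.sqrt (2 * (-Real.log u) + dC)) :=
        hM.antitoneOn (Set.mem_Ici.2 hy2M) (Set.mem_Ici.2 hMx) hy2le
      have hll : Real.log (g x) ≤ Real.log (g (Real.sqrt (2 * (-Real.log u) + dC))) :=
        Real.log_le_log (hpos x) hgle
      calc Real.sqrt (-2 * Real.log u -
            2 * Real.log (g (Real.sqrt (2 * (-Real.log u) + dC))) -
            Real.log (2 * Real.pi)) ≤ Real.sqrt (x ^ 2) :=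
            Real.sqrt_le_sqrt (by linarith [hxsq])
        _ = x := Real.sqrt_sq hx0
    · -- upper bound with sqrt(-4 log u)
      have hgle : g (Real.sqrt (-4 * Real.log u)) ≤ g x :=
        hM.antitoneOn (Set.mem_Ici.2 hMx)
          (Set.mem_Ici.2 (le_trans hMx hxle4)) hxle4
      have hll : Real.log (g (Real.sqrt (-4 * Real.log u))) ≤ Real.log (g x) :=
        Real.log_le_log (hpos _) hgle
      calc x = Real.sqrt (x ^ 2) := (Real.sqrt_sq hx0).symm
        _ ≤ _ := Real.sqrt_le_sqrt (by linarith [hxsq])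
    · -- sharper upper bound
      have hgle : g (Real.sqrt (-2 * Real.log u + 5 * Λ * Real.sqrt (-Real.log u))) ≤ g x :=
        hM.antitoneOn (Set.mem_Ici.2 hMx)
          (Set.mem_Ici.2 (le_trans hMx hxle5)) hxle5
      have hll : Real.log (g (Real.sqrt (-2 * Real.log u + 5 * Λ * Real.sqrt (-Real.log u)))) ≤
          Real.log (g x) := Real.log_le_log (hpos _) hgle
      calc x = Real.sqrt (x ^ 2) := (Real.sqrt_sq hx0).symm
        _ ≤ _ := Real.sqrt_le_sqrt (by linarith [hxsq])
  constructor
  · -- extract u₀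
    obtain ⟨ε, hε, hsub⟩ := mem_nhdsGT_iff_exists_Ioo_subset.1 key
    rw [Set.mem_Ioi] at hε
    refine ⟨min (ε / 2) 1, by positivity, min_le_right _ _, fun u hu hu' => ?_⟩
    have humem : u ∈ Set.Ioo (0:ℝ) ε :=
      ⟨hu, lt_of_le_of_lt (le_trans hu' (min_le_left _ _)) (by linarith)⟩
    exact (hsub humem).1
  · -- the limit
    have hden : ∀ᶠ u in nhdsWithin (0:ℝ) (Set.Ioi 0),
        0 < Real.sqrt (-2 * Real.log u) :=
      (ht.eventually (Filter.eventually_ge_atTop 1)).mono fun u h =>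
        Real.sqrt_pos.2 (by linarith)
    have hlo : Filter.Tendsto
        (fun u : ℝ => Real.sqrt (2 * (-Real.log u) + dC) / Real.sqrt (-2 * Real.log u))
        (nhdsWithin 0 (Set.Ioi 0)) (nhds 1) := by
      have h := (sqrt_ratio_tendsto_one dC).comp ht
      refine h.congr fun u => ?_
      simp only [Function.comp_apply]
      rw [show -2 * Real.log u = 2 * (-Real.log u) by ring]
    have hhi : Filter.Tendsto
        (fun u : ℝ => (Λ + Real.sqrt (2 * (-Real.log u) + c₁)) / Real.sqrt (-2 * Real.log u))
        (nhdsWithin 0 (Set.Ioi 0)) (nhds 1) := by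
      have hA : Filter.Tendsto (fun t : ℝ => Real.sqrt (2 * t)) Filter.atTop Filter.atTop := by
        refine (hsqt.comp (haff 0)).congr fun t => ?_
        simp [Function.comp]
      have h1 : Filter.Tendsto (fun t : ℝ => Λ / Real.sqrt (2 * t)) Filter.atTop (nhds 0) :=
        Filter.Tendsto.div_atTop tendsto_const_nhds hA
      have h2 := sqrt_ratio_tendsto_one c₁
      have h3 := h1.add h2
      rw [zero_add] at h3
      have h4 : Filter.Tendsto
          (fun t : ℝ => (Λ + Real.sqrt (2 * t + c₁)) / Real.sqrt (2 * t))
          Filter.atTop (nhds 1) := by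
        refine h3.congr fun t => ?_
        rw [← add_div]
      have h5 := h4.comp ht
      refine h5.congr fun u => ?_
      simp only [Function.comp_apply]
      rw [show -2 * Real.log u = 2 * (-Real.log u) by ring]
    refine tendsto_of_tendsto_of_tendsto_of_le_of_le' hlo hhi ?_ ?_
    · filter_upwards [key, hden] with u hk hd
      exact (div_le_div_iff_of_pos_right hd).2 hk.2.1
    · filter_upwards [key, hden] with u hk hd
      exact (div_le_div_iff_of_pos_right hd).2 hk.2.2
end

section
/- Let g be a positive, symmetric, differentiable density on ℝ, decreasing near +∞, satisfying |(log g)'| ≤ Λ, Ḡ(y) ≍ g(y)y^{κ−1} as y → ∞ for some κ ∈ [1,2], y ↦ (1+y²)g(y) bounded, and g/φ increasing on [0,∞) from (g/φ)(0) < 1 to ∞. Let β(x) = g(x)/φ(x) − 1 and ζ(w) = β^{-1}(1/w). Then there is a constant C > 0 such that for all sufficiently small w: ζ(w) ≥ (−2 log w − 2 log g(√(−2 log(Cw))) − log(2π))^{1/2}, ζ(w) ≤ (−2 log w − 2 log g(√(−5 log w)) + C)^{1/2}, and the sharper bound ζ(w) ≤ (−2 log w − 2 log g((−2 log w + 6Λ(−log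 w)^{1/2})^{1/2}) + C)^{1/2}. In particular ζ(w) ~ (−2 log w)^{1/2} as w → 0. -/
open MeasureTheory ProbabilityTheory Filter Set
open scoped Classical ENNReal

/-! The defining equation `g z = (1 + w⁻¹) φ z` of `z = ζ w` reads
`z² = 2 log (1 + w⁻¹) - log (2π) - 2 log g(z)`, with `-log w ≤ log (1 + w⁻¹) ≤ log 2 - log w`.
Boundedness of `g` gives `ζ(w)² ≥ -2 log (C w)` with `C = √(2π) M` for a bound `M` of `g`,
and the Lipschitz bound `log g(z) ≥ log g(0) - Λ z` gives `ζ(w)² ≤ -2 log w + 6Λ √(-log w)` for small `w`.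
Since `g` is eventually decreasing, `g` may be evaluated at these estimates of `ζ(w)` instead of
at `ζ(w)` itself, which turns the identity into the three bounds; squeezing `ζ(w)² / (-2 log w)`
gives the asymptotics. -/

open Real Topology

lemma neg_log_le_log_one_add_inv {w : ℝ} (hw : 0 < w) : -log w ≤ log (1 + w⁻¹) := by
  rw [← log_inv]
  exact log_le_log (by positivity) (by linarith)

lemma log_one_add_inv_le {w : ℝ} (hw : 0 < w) (hw1 : w ≤ 1) : log (1 + w⁻¹) ≤ log 2 - log w := by
  rw [← log_div two_ne_zero hw.ne']
  have : 1 ≤ w⁻¹ := one_le_inv_iff₀.mpr ⟨hw, hw1⟩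
  exact log_le_log (by positivity) (by rw [div_eq_mul_inv]; linarith)

lemma two_mul_log_two_le_log_two_pi : 2 * log 2 ≤ log (2 * π) := by
  rw [← log_rpow two_pos]
  exact log_le_log (by positivity) (by norm_num; linarith [pi_gt_three])

lemma sq_le_two_mul_sq_add_of_sq_le {Λ c s z : ℝ} (hΛ : 0 ≤ Λ) (hs : 0 ≤ s)
    (h₁ : c + Λ ^ 2 ≤ 2 * s ^ 2) (h₂ : c + 2 * Λ ^ 2 ≤ 2 * Λ * s)
    (hz : z ^ 2 ≤ 2 * s ^ 2 + c + 2 * Λ * z) : z ^ 2 ≤ 2 * s ^ 2 + 6 * Λ * s := by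
  -- `(z - Λ)² ≤ 4s²` bounds the linear term: `2Λz ≤ 2Λ² + 4Λs`.
  have : z - Λ ≤ 2 * s := by nlinarith
  nlinarith

lemma log_sub_mul_le_log_of_abs_deriv_log_le {g : ℝ → ℝ} {Λ : ℝ} (hpos : ∀ x, 0 < g x)
    (hdiff : Differentiable ℝ g) (hlip : ∀ x, |deriv (fun y => log (g y)) x| ≤ Λ)
    {z : ℝ} (hz : 0 ≤ z) : log (g 0) - Λ * z ≤ log (g z) := by
  have h := (convex_univ : Convex ℝ (univ : Set ℝ)).norm_image_sub_le_of_norm_deriv_le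
    (fun x _ => ((hdiff x).log (hpos x).ne')) (fun x _ => hlip x) (mem_univ z) (mem_univ 0)
  rw [Real.norm_eq_abs, Real.norm_eq_abs, zero_sub, abs_neg, abs_of_nonneg hz] at h
  linarith [(le_abs_self _).trans h]

lemma tendsto_div_sqrt_of_sq_bounds {α : Type*} {l : Filter α} {f T : α → ℝ} {b c : ℝ}
    (hT : Tendsto T l atTop) (hf : ∀ᶠ x in l, 0 ≤ f x)
    (hlow : ∀ᶠ x in l, T x - c ≤ f x ^ 2) (hup : ∀ᶠ x in l, f x ^ 2 ≤ T x + b * √(T x)) :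
    Tendsto (fun x => f x / √(T x)) l (𝓝 1) := by
  have hsqrtT : Tendsto (fun x => √(T x)) l atTop := tendsto_sqrt_atTop.comp hT
  have hlow' : Tendsto (fun x => 1 - c / T x) l (𝓝 1) := by
    simpa using tendsto_const_nhds.sub (tendsto_const_nhds.div_atTop hT)
  have hup' : Tendsto (fun x => 1 + b / √(T x)) l (𝓝 1) := by
    simpa using tendsto_const_nhds.add (tendsto_const_nhds.div_atTop hsqrtT)
  have hsq : Tendsto (fun x => f x ^ 2 / T x) l (𝓝 1) := by
    refine tendsto_of_tendsto_of_tendsto_of_le_of_le' hlow' hup' ?_ ?_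
    · filter_upwards [hlow, hT.eventually_gt_atTop 0] with x hx hTx
      rw [one_sub_div hTx.ne', div_le_div_iff_of_pos_right hTx]
      exact hx
    · filter_upwards [hup, hT.eventually_gt_atTop 0] with x hx hTx
      rw [div_le_iff₀ hTx]
      calc f x ^ 2 ≤ T x + b * √(T x) := hx
        _ = (1 + b / √(T x)) * T x := by
          field_simp
          linear_combination b * mul_self_sqrt hTx.le
  have hroot := (continuous_sqrt.tendsto 1).comp hsq
  rw [sqrt_one] at hroot
  refine hroot.congr' ?_
  filter_upwards [hf] with x hx
  simp only [Function.comp, sqrt_div (sq_nonneg _), sqrt_sq hx]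

lemma tendsto_neg_log_nhdsGT_zero : Tendsto (fun w => -log w) (𝓝[>] 0) atTop :=
  tendsto_neg_atBot_atTop.comp tendsto_log_nhdsGT_zero

lemma tendsto_sqrt_neg_log_nhdsGT_zero : Tendsto (fun w => √(-log w)) (𝓝[>] 0) atTop :=
  tendsto_sqrt_atTop.comp tendsto_neg_log_nhdsGT_zero

lemma exists_forall_of_eventually_nhdsGT_zero {p : ℝ → Prop} (h : ∀ᶠ w in 𝓝[>] 0, p w) :
    ∃ w₀, 0 < w₀ ∧ w₀ ≤ 1 ∧ ∀ w, 0 < w → w ≤ w₀ → p w := by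
  obtain ⟨u, hu, hp⟩ := (nhdsGT_basis (0 : ℝ)).eventually_iff.mp h
  refine ⟨min (u / 2) 1, by positivity, min_le_right _ _, fun w hw hwu => hp ⟨hw, ?_⟩⟩
  linarith [min_le_left (u / 2) 1]

lemma eventually_neg_two_mul_log_add_le (Λ : ℝ) :
    ∀ᶠ w in 𝓝[>] 0, -2 * log w + 6 * Λ * √(-log w) ≤ -5 * log w := by
  filter_upwards [tendsto_sqrt_neg_log_nhdsGT_zero.eventually_ge_atTop (2 * Λ),
    Ioc_mem_nhdsGT one_pos] with w hs ⟨hw, hw1⟩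
  have hsq : √(-log w) ^ 2 = -log w := sq_sqrt (neg_nonneg.mpr (log_nonpos hw.le hw1))
  nlinarith [sqrt_nonneg (-log w)]

lemma log_stdphi (x : ℝ) : log (stdphi x) = -(x ^ 2) / 2 - log (2 * π) / 2 := by
  rw [stdphi, log_mul (by positivity) (exp_ne_zero _), log_inv, log_exp,
    log_sqrt (by positivity)]
  ring

section Threshold

variable {g : ℝ → ℝ} {w z : ℝ}

lemma sq_eq_of_betaf_eq_inv (hw : 0 < w) (h : betaf g z = w⁻¹) :
    z ^ 2 = 2 * log (1 + w⁻¹) - log (2 * π) - 2 * log (g z) := by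
  have hφ : 0 < stdphi z := by unfold stdphi; positivity
  have hgz : g z = (1 + w⁻¹) * stdphi z := by
    rw [betaf, sub_eq_iff_eq_add, div_eq_iff hφ.ne'] at h
    rw [h]; ring
  rw [hgz, log_mul (by positivity) hφ.ne', log_stdphi]
  ring

lemma neg_two_mul_log_sub_le_sq (hw : 0 < w) (h : betaf g z = w⁻¹) :
    -2 * log w - log (2 * π) - 2 * log (g z) ≤ z ^ 2 := by
  rw [sq_eq_of_betaf_eq_inv hw h]
  linarith [neg_log_le_log_one_add_inv hw]

lemma sq_le_neg_two_mul_log_sub (hw : 0 < w) (hw1 : w ≤ 1) (h : betaf g z = w⁻¹) :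
    z ^ 2 ≤ -2 * log w - 2 * log (g z) := by
  rw [sq_eq_of_betaf_eq_inv hw h]
  linarith [log_one_add_inv_le hw hw1, two_mul_log_two_le_log_two_pi]

lemma neg_two_mul_log_le_sq_of_le {Mb : ℝ} (hpos : ∀ x, 0 < g x) (hg_le : ∀ x, g x ≤ Mb)
    (hw : 0 < w) (h : betaf g z = w⁻¹) : -2 * log (√(2 * π) * Mb * w) ≤ z ^ 2 := by
  have hMb : 0 < Mb := (hpos 0).trans_le (hg_le 0)
  rw [log_mul (by positivity) hw.ne', log_mul (by positivity) hMb.ne', log_sqrt (by positivity)]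
  linarith [neg_two_mul_log_sub_le_sq hw h, log_le_log (hpos z) (hg_le z)]

lemma le_sqrt_of_le_of_antitoneOn {M C y : ℝ} (hpos : ∀ x, 0 < g x)
    (hanti : AntitoneOn g (Ici M)) (hw : 0 < w) (hw1 : w ≤ 1) (h : betaf g z = w⁻¹)
    (hMz : M ≤ z) (hzy : z ≤ y) (hC : 0 ≤ C) :
    z ≤ √(-2 * log w - 2 * log (g y) + C) := by
  have hgy : log (g y) ≤ log (g z) :=
    log_le_log (hpos y) (hanti hMz (hMz.trans hzy : M ≤ y) hzy)
  exact le_sqrt_of_sq_le (by linarith [sq_le_neg_two_mul_log_sub hw hw1 h])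

end Threshold

section Zeta

variable {g ζ : ℝ → ℝ}

lemma eventually_le_zeta {M Mb : ℝ} (hpos : ∀ x, 0 < g x) (hg_le : ∀ x, g x ≤ Mb)
    (hanti : AntitoneOn g (Ici M))
    (hζ : ∀ w : ℝ, 0 < w → w ≤ 1 → 0 ≤ ζ w ∧ betaf g (ζ w) = w⁻¹) :
    ∀ᶠ w in 𝓝[>] 0, M ≤ ζ w ∧
      √(-2 * log w - 2 * log (g (√(-2 * log (√(2 * π) * Mb * w)))) - log (2 * π)) ≤ ζ w := by
  have hC : 0 < √(2 * π) * Mb := by have := (hpos 0).trans_le (hg_le 0); positivity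
  filter_upwards [tendsto_neg_log_nhdsGT_zero.eventually_ge_atTop
      (log (√(2 * π) * Mb) + M ^ 2 / 2), Ioc_mem_nhdsGT one_pos] with w hL ⟨hw, hw1⟩
  obtain ⟨hz, hβ⟩ := hζ w hw hw1
  set y := √(-2 * log (√(2 * π) * Mb * w))
  have hMy : M ≤ y :=
    (le_abs_self M).trans (abs_le_sqrt (by rw [log_mul hC.ne' hw.ne']; linarith))
  have hyz : y ≤ ζ w := (sqrt_le_left hz).mpr (neg_two_mul_log_le_sq_of_le hpos hg_le hw hβ)
  refine ⟨hMy.trans hyz, (sqrt_le_left hz).mpr ?_⟩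
  linarith [neg_two_mul_log_sub_le_sq hw hβ,
    log_le_log (hpos _) (hanti hMy (hMy.trans hyz : M ≤ ζ w) hyz)]

lemma eventually_sq_zeta_le {Λ : ℝ} (hΛ : 0 < Λ)
    (hlog : ∀ z, 0 ≤ z → log (g 0) - Λ * z ≤ log (g z))
    (hζ : ∀ w : ℝ, 0 < w → w ≤ 1 → 0 ≤ ζ w ∧ betaf g (ζ w) = w⁻¹) :
    ∀ᶠ w in 𝓝[>] 0, ζ w ^ 2 ≤ -2 * log w + 6 * Λ * √(-log w) := by
  set c := -2 * log (g 0)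
  filter_upwards [tendsto_neg_log_nhdsGT_zero.eventually_ge_atTop ((c + Λ ^ 2) / 2),
    tendsto_sqrt_neg_log_nhdsGT_zero.eventually_ge_atTop
      ((c + 2 * Λ ^ 2) / (2 * Λ)), Ioc_mem_nhdsGT one_pos] with w hL hs ⟨hw, hw1⟩
  obtain ⟨hz, hβ⟩ := hζ w hw hw1
  have hsq : √(-log w) ^ 2 = -log w := sq_sqrt (neg_nonneg.mpr (log_nonpos hw.le hw1))
  have h₂ : c + 2 * Λ ^ 2 ≤ 2 * Λ * √(-log w) := by
    rw [div_le_iff₀ (by positivity)] at hs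
    linarith
  have key := sq_le_two_mul_sq_add_of_sq_le (z := ζ w) hΛ.le (sqrt_nonneg _) (by linarith) h₂
    (by linarith [sq_le_neg_two_mul_log_sub hw hw1 hβ, hlog _ hz])
  linarith

end Zeta

theorem zeta_threshold_bounds_general
    (g : ℝ → ℝ) (Λ : ℝ)
    (hpos : ∀ x, 0 < g x) (hdiff : Differentiable ℝ g)
    (hdec : ∃ M : ℝ, StrictAntiOn g (Set.Ici M))
    (hΛ : 0 < Λ) (hlip : ∀ x : ℝ, |deriv (fun y => Real.log (g y)) x| ≤ Λ)
    (hbdd : ∃ M : ℝ, ∀ y : ℝ, (1 + y ^ 2) * g y ≤ M)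
    (ζ : ℝ → ℝ)
    (hζ : ∀ w : ℝ, 0 < w → w ≤ 1 → 0 ≤ ζ w ∧ betaf g (ζ w) = w⁻¹) :
    (∃ C : ℝ, 0 < C ∧ ∃ w₀ : ℝ, 0 < w₀ ∧ w₀ ≤ 1 ∧ ∀ w : ℝ, 0 < w → w ≤ w₀ →
        Real.sqrt (-2 * Real.log w -
            2 * Real.log (g (Real.sqrt (-2 * Real.log (C * w)))) -
            Real.log (2 * Real.pi)) ≤ ζ w ∧
        ζ w ≤ Real.sqrt (-2 * Real.log w -
            2 * Real.log (g (Real.sqrt (-5 * Real.log w))) + C) ∧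
        ζ w ≤ Real.sqrt (-2 * Real.log w -
            2 * Real.log (g (Real.sqrt
              (-2 * Real.log w + 6 * Λ * Real.sqrt (-Real.log w)))) + C)) ∧
      Filter.Tendsto (fun w : ℝ => ζ w / Real.sqrt (-2 * Real.log w))
        (nhdsWithin 0 (Set.Ioi 0)) (nhds 1) := by
  obtain ⟨Mb, hMb⟩ := hbdd
  obtain ⟨M, hanti⟩ := hdec
  have hg_le : ∀ y, g y ≤ Mb := fun y =>
    (le_mul_of_one_le_left (hpos y).le (by nlinarith [sq_nonneg y])).trans (hMb y)
  have hC : 0 < √(2 * π) * Mb := by have := (hpos 0).trans_le (hg_le 0); positivity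
  have hup := eventually_sq_zeta_le hΛ
    (fun z hz => log_sub_mul_le_log_of_abs_deriv_log_le hpos hdiff hlip hz) hζ
  have hunit : ∀ᶠ w in 𝓝[>] (0 : ℝ), w ∈ Ioc 0 1 := Ioc_mem_nhdsGT one_pos
  refine ⟨⟨_, hC, exists_forall_of_eventually_nhdsGT_zero ?_⟩, ?_⟩
  · filter_upwards [eventually_le_zeta hpos hg_le hanti.antitoneOn hζ, hup,
      eventually_neg_two_mul_log_add_le Λ, hunit] with w ⟨hMz, hlow⟩ hz2 h5 ⟨hw, hw1⟩
    have hbound := fun {y} (hzy : ζ w ≤ y) =>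
      le_sqrt_of_le_of_antitoneOn hpos hanti.antitoneOn hw hw1 (hζ w hw hw1).2 hMz hzy hC.le
    exact ⟨hlow, hbound (le_sqrt_of_sq_le (hz2.trans h5)), hbound (le_sqrt_of_sq_le hz2)⟩
  · refine tendsto_div_sqrt_of_sq_bounds (b := 6 * Λ) (c := 2 * log (√(2 * π) * Mb))
      (by simpa only [neg_mul_comm] using tendsto_neg_log_nhdsGT_zero.const_mul_atTop two_pos)
      ?_ ?_ ?_ <;> filter_upwards [hup, hunit] with w hz2 ⟨hw, hw1⟩
    · exact (hζ w hw hw1).1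
    · have := neg_two_mul_log_le_sq_of_le hpos hg_le hw (hζ w hw hw1).2
      rw [log_mul hC.ne' hw.ne'] at this
      linarith
    · have hlog : log w ≤ 0 := log_nonpos hw.le hw1
      have := sqrt_le_sqrt (by linarith : -log w ≤ -2 * log w)
      linarith [mul_le_mul_of_nonneg_left this (by positivity : 0 ≤ 6 * Λ)]

/-- **Lemma (bounds on the pseudo-threshold `ζ`).** Let `g` be a positive symmetric
differentiable density, decreasing near `+∞`, with `|(log g)'| ≤ Λ`, `Ḡ(y) ≍ g(y)y^{κ−1}` as
`y → ∞` (`κ ∈ [1,2]`), `(1+y²)g(y)` bounded, and `g/φ` increasing on `[0,∞)` from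
`(g/φ)(0) < 1` to `∞`. Let `ζ(w) = β⁻¹(1/w)` where `β = g/φ − 1`. Then there is `C > 0` such
that for all sufficiently small `w`:
`ζ(w) ≥ (−2 log w − 2 log g(√(−2 log(Cw))) − log(2π))^{1/2}`,
`ζ(w) ≤ (−2 log w − 2 log g(√(−5 log w)) + C)^{1/2}`, and the sharper bound
`ζ(w) ≤ (−2 log w − 2 log g((−2 log w + 6Λ(−log w)^{1/2})^{1/2}) + C)^{1/2}`.
In particular `ζ(w) ∼ (−2 log w)^{1/2}` as `w → 0⁺`. -/
theorem zeta_threshold_bounds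
    (g : ℝ → ℝ) (Λ κ : ℝ)
    (hpos : ∀ x, 0 < g x) (hsymm : ∀ x, g (-x) = g x)
    (hdiff : Differentiable ℝ g) (hdens : ∫ x, g x = 1)
    (hdec : ∃ M : ℝ, StrictAntiOn g (Set.Ici M))
    (hΛ : 0 < Λ) (hlip : ∀ x : ℝ, |deriv (fun y => Real.log (g y)) x| ≤ Λ)
    (hκ : κ ∈ Set.Icc (1 : ℝ) 2)
    (htail : ∃ c C : ℝ, 0 < c ∧ 0 < C ∧ ∃ y₀ : ℝ, ∀ y ≥ y₀,
      c * (g y * y ^ (κ - 1)) ≤ Gbar g y ∧ Gbar g y ≤ C * (g y * y ^ (κ - 1)))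
    (hbdd : ∃ M : ℝ, ∀ y : ℝ, (1 + y ^ 2) * g y ≤ M)
    (hinc : StrictMonoOn (fun x => g x / stdphi x) (Set.Ici 0))
    (h0 : g 0 / stdphi 0 < 1)
    (hinf : Filter.Tendsto (fun x => g x / stdphi x) Filter.atTop Filter.atTop)
    (ζ : ℝ → ℝ)
    (hζ : ∀ w : ℝ, 0 < w → w ≤ 1 → 0 ≤ ζ w ∧ betaf g (ζ w) = w⁻¹) :
    (∃ C : ℝ, 0 < C ∧ ∃ w₀ : ℝ, 0 < w₀ ∧ w₀ ≤ 1 ∧ ∀ w : ℝ, 0 < w → w ≤ w₀ →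
        Real.sqrt (-2 * Real.log w -
            2 * Real.log (g (Real.sqrt (-2 * Real.log (C * w)))) -
            Real.log (2 * Real.pi)) ≤ ζ w ∧
        ζ w ≤ Real.sqrt (-2 * Real.log w -
            2 * Real.log (g (Real.sqrt (-5 * Real.log w))) + C) ∧
        ζ w ≤ Real.sqrt (-2 * Real.log w -
            2 * Real.log (g (Real.sqrt
              (-2 * Real.log w + 6 * Λ * Real.sqrt (-Real.log w)))) + C)) ∧
      Filter.Tendsto (fun w : ℝ => ζ w / Real.sqrt (-2 * Real.log w))
        (nhdsWithin 0 (Set.Ioi 0)) (nhds 1) :=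
  zeta_threshold_bounds_general g Λ hpos hdiff hdec hΛ hlip hbdd ζ hζ
end
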